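/- arXiv:2202.00437 — 3 statements merged into one kernel-verified Lean document; each statement's English description precedes it below -/
import Mathlib

section
/- Let β=(β_n)_{n∈ℕ} be a Cantor base with x_β<+∞, let a be an infinite word over ℕ, and let x∈(x_β−1,x_β]. Then a=ℓ_β(x) if and only if a_n∈[[0,⌈β_n⌉−1]] for all n∈ℕ, val_β(a)=x, and for all ℓ∈ℕ, Σ_{n=ℓ+1}^{+∞} a_n/∏_{k=0}^n β_k > (x_{β^(ℓ+1)}−1)/∏_{k=0}^ℓ β_k. -/
open Filter Topology

/-- A Cantor real base: a sequence of reals `> 1` whose infinite product diverges to `+∞`. -/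
structure IsCantorBase (β : ℕ → ℝ) : Prop where
  one_lt : ∀ n, 1 < β n
  prod_tendsto : Tendsto (fun N => ∏ i ∈ Finset.range N, β i) atTop atTop

/-- The product `β_0 ⋯ β_n`. -/
noncomputable def prodUpTo (β : ℕ → ℝ) (n : ℕ) : ℝ := ∏ i ∈ Finset.range (n + 1), β i

/-- The shifted base `β^(n) = (β_n, β_{n+1}, …)`. -/
def shiftBase (β : ℕ → ℝ) (n : ℕ) : ℕ → ℝ := fun m => β (n + m)

/-- `x_β = Σ_{n} (⌈β_n⌉ - 1)/(β_0 ⋯ β_n)`. -/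
noncomputable def xB (β : ℕ → ℝ) : ℝ := ∑' n, ((⌈β n⌉ : ℝ) - 1) / prodUpTo β n

/-- The condition `x_β < +∞`, i.e. the series defining `x_β` converges. -/
def XBSummable (β : ℕ → ℝ) : Prop :=
  Summable (fun n => ((⌈β n⌉ : ℝ) - 1) / prodUpTo β n)

/-- `val_β(a) = Σ_n a_n/(β_0 ⋯ β_n)`. -/
noncomputable def valB (β : ℕ → ℝ) (a : ℕ → ℤ) : ℝ := ∑' n, (a n : ℝ) / prodUpTo β n

/-- The digit condition `a_n ∈ [[0, ⌈β_n⌉ - 1]]` for all `n`. -/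
def validWord (β : ℕ → ℝ) (a : ℕ → ℤ) : Prop := ∀ n, 0 ≤ a n ∧ a n ≤ ⌈β n⌉ - 1

/-- The flip map `θ_β`. -/
noncomputable def theta (β : ℕ → ℝ) (a : ℕ → ℤ) : ℕ → ℤ := fun n => ⌈β n⌉ - 1 - a n

/-- The greedy remainders `r_{β,n}(x)`. -/
noncomputable def greedyR (β : ℕ → ℝ) (x : ℝ) : ℕ → ℝ
  | 0 => β 0 * x - (⌊β 0 * x⌋ : ℝ)
  | n + 1 => β (n + 1) * greedyR β x n - (⌊β (n + 1) * greedyR β x n⌋ : ℝ)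

/-- The greedy digits `ε_{β,n}(x)`; `greedyDigit β x` is the greedy β-expansion `d_β(x)`. -/
noncomputable def greedyDigit (β : ℕ → ℝ) (x : ℝ) : ℕ → ℤ
  | 0 => ⌊β 0 * x⌋
  | n + 1 => ⌊β (n + 1) * greedyR β x n⌋

/-- The lazy remainders `s_{β,n}(x)`. -/
noncomputable def lazyS (β : ℕ → ℝ) (x : ℝ) : ℕ → ℝ
  | 0 => β 0 * x - (⌈β 0 * x - xB (shiftBase β 1)⌉ : ℝ)
  | n + 1 => β (n + 1) * lazyS β x n -
      (⌈β (n + 1) * lazyS β x n - xB (shiftBase β (n + 2))⌉ : ℝ)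

/-- The lazy digits `ξ_{β,n}(x)`; `lazyDigit β x` is the lazy β-expansion `ℓ_β(x)`. -/
noncomputable def lazyDigit (β : ℕ → ℝ) (x : ℝ) : ℕ → ℤ
  | 0 => ⌈β 0 * x - xB (shiftBase β 1)⌉
  | n + 1 => ⌈β (n + 1) * lazyS β x n - xB (shiftBase β (n + 2))⌉

/-- Strict lexicographic order on infinite words. -/
def lexLt (a b : ℕ → ℤ) : Prop := ∃ k, (∀ i < k, a i = b i) ∧ a k < b k

/-- Lexicographic order on infinite words. -/
def lexLe (a b : ℕ → ℤ) : Prop := lexLt a b ∨ a = b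

/-- `D_β`, the set of greedy β-expansions of points of `[0,1)`. -/
def greedySet (β : ℕ → ℝ) : Set (ℕ → ℤ) :=
  {a | ∃ x ∈ Set.Ico (0 : ℝ) 1, a = greedyDigit β x}

/-- `D'_β`, the set of lazy β-expansions of points of `(x_β - 1, x_β]`. -/
def lazySet (β : ℕ → ℝ) : Set (ℕ → ℤ) :=
  {a | ∃ x ∈ Set.Ioc (xB β - 1) (xB β), a = lazyDigit β x}

/-- `Δ'_β = ⋃_n D'_{β^(n)}`. -/
def deltaSet (β : ℕ → ℝ) : Set (ℕ → ℤ) := ⋃ n, lazySet (shiftBase β n)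

/-!
For a word `a`, write `R_n(a) = β_0⋯β_{n-1} · Σ_{m ≥ n} a_m/(β_0⋯β_m)`, and let `r_0 = x`,
`r_{n+1} = s_{β,n}(x)` be the lazy remainders. Both satisfy `β_n r_n = a_n + r_{n+1}`, and because
`β_n x_{β^(n)} = ⌈β_n⌉ - 1 + x_{β^(n+1)}`, the lazy digit `ξ_{β,n}(x)` is the unique integer
`a_n` putting `r_{n+1}` in `(x_{β^(n+1)} - 1, x_{β^(n+1)}]`.

Forward: the lazy remainders stay in these intervals and `β_0⋯β_n → ∞`, so
`r_n/(β_0⋯β_{n-1}) → 0`; hence `val_β(ℓ_β(x)) = x`, the remainders are the rescaled tails, and the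
lower ends of the intervals give the tail inequalities. Conversely, digit bounds give
`R_{n+1}(a) ≤ x_{β^(n+1)}` and the hypothesis gives `R_{n+1}(a) > x_{β^(n+1)} - 1`, so by
uniqueness the lazy algorithm started at `x = R_0(a)` reproduces `a`.
-/

open Finset

noncomputable def xBTerm (β : ℕ → ℝ) (n : ℕ) : ℝ := ((⌈β n⌉ : ℝ) - 1) / prodUpTo β n

noncomputable def tailVal (β : ℕ → ℝ) (a : ℕ → ℤ) (n : ℕ) : ℝ :=
  (∏ i ∈ range n, β i) * ∑' m, (a (m + n) : ℝ) / prodUpTo β (m + n)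

/-- The remainder from which the `n`-th lazy digit is computed: `x` for `n = 0`, then
`s_{β,n-1}(x)`. This shift of index makes `lazyDigit` and `lazyS` uniform in `n`. -/
noncomputable def lazyRem (β : ℕ → ℝ) (x : ℝ) : ℕ → ℝ
  | 0 => x
  | n + 1 => lazyS β x n

section CantorBase

variable {β : ℕ → ℝ}

lemma IsCantorBase.pos (hβ : IsCantorBase β) (n : ℕ) : 0 < β n :=
  zero_lt_one.trans (hβ.one_lt n)

lemma prodUpTo_pos (hpos : ∀ n, 0 < β n) (n : ℕ) : 0 < prodUpTo β n :=
  prod_pos fun i _ => hpos i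

lemma prodUpTo_add (β : ℕ → ℝ) (m n : ℕ) :
    prodUpTo β (m + n) = (∏ i ∈ range n, β i) * prodUpTo (shiftBase β n) m := by
  rw [prodUpTo, prodUpTo, add_right_comm, add_comm, prod_range_add]
  rfl

lemma shiftBase_zero (β : ℕ → ℝ) : shiftBase β 0 = β := by
  funext m; simp [shiftBase]

lemma shiftBase_shiftBase (β : ℕ → ℝ) (n m : ℕ) :
    shiftBase (shiftBase β n) m = shiftBase β (n + m) := by
  funext k; simp [shiftBase, add_assoc]

lemma xBTerm_shiftBase (hne : ∀ n, β n ≠ 0) (n m : ℕ) :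
    xBTerm (shiftBase β n) m = (∏ i ∈ range n, β i) * xBTerm β (m + n) := by
  have hQ : ∏ i ∈ range n, β i ≠ 0 := prod_ne_zero_iff.2 fun i _ => hne i
  rw [xBTerm, xBTerm, prodUpTo_add, ← mul_div_assoc, mul_div_mul_left _ _ hQ, shiftBase, add_comm n]

lemma XBSummable.shift (hne : ∀ n, β n ≠ 0) (hx : XBSummable β) (n : ℕ) :
    XBSummable (shiftBase β n) :=
  (((summable_nat_add_iff n).2 hx).mul_left _).congr fun m => (xBTerm_shiftBase hne n m).symm

lemma xB_shiftBase (hne : ∀ n, β n ≠ 0) (n : ℕ) :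
    xB (shiftBase β n) = (∏ i ∈ range n, β i) * ∑' m, xBTerm β (m + n) := by
  rw [← tsum_mul_left]
  exact tsum_congr (xBTerm_shiftBase hne n)

lemma mul_xB (hne : ∀ n, β n ≠ 0) (hx : XBSummable β) :
    β 0 * xB β = (⌈β 0⌉ - 1 : ℝ) + xB (shiftBase β 1) := by
  have hx' : Summable (xBTerm β) := hx
  have hprod : prodUpTo β 0 = β 0 := prod_range_one β
  rw [xB_shiftBase hne, prod_range_one, show xB β = ∑' n, xBTerm β n from rfl,
    hx'.tsum_eq_zero_add, xBTerm, hprod, mul_add, mul_div_cancel₀ _ (hne 0)]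

lemma mul_xB_shiftBase (hne : ∀ n, β n ≠ 0) (hx : XBSummable β) (n : ℕ) :
    β n * xB (shiftBase β n) = (⌈β n⌉ - 1 : ℝ) + xB (shiftBase β (n + 1)) := by
  have h := mul_xB (β := shiftBase β n) (fun m => hne (n + m)) (hx.shift hne n)
  rwa [shiftBase_shiftBase, shiftBase, add_zero] at h

lemma xB_nonneg (hpos : ∀ n, 0 < β n) : 0 ≤ xB β :=
  tsum_nonneg fun n => div_nonneg
    (sub_nonneg.2 (by exact_mod_cast Int.ceil_pos.2 (hpos n))) (prodUpTo_pos hpos n).le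

lemma sub_ceil_sub_mem_Ioc (y c : ℝ) : y - ⌈y - c⌉ ∈ Set.Ioc (c - 1) c := by
  constructor <;> linarith [Int.ceil_lt_add_one (y - c), Int.le_ceil (y - c)]

lemma ceil_add_sub_eq {c r : ℝ} (hr : r ∈ Set.Ioc (c - 1) c) (k : ℤ) : ⌈k + r - c⌉ = k :=
  Int.ceil_eq_iff.2 ⟨by linarith [hr.1], by linarith [hr.2]⟩

lemma ceil_mul_sub_xB_mem (hpos : ∀ n, 0 < β n) (hx : XBSummable β) {n : ℕ} {t : ℝ}
    (ht : t ∈ Set.Ioc (xB (shiftBase β n) - 1) (xB (shiftBase β n))) :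
    0 ≤ ⌈β n * t - xB (shiftBase β (n + 1))⌉ ∧
      ⌈β n * t - xB (shiftBase β (n + 1))⌉ ≤ ⌈β n⌉ - 1 := by
  have hrec := mul_xB_shiftBase (fun n => (hpos n).ne') hx n
  have hlo := mul_lt_mul_of_pos_left ht.1 (hpos n)
  have hhi := mul_le_mul_of_nonneg_left ht.2 (hpos n).le
  constructor
  · have : ((-1 : ℤ) : ℝ) < β n * t - xB (shiftBase β (n + 1)) := by
      push_cast; linarith [Int.le_ceil (β n)]
    have := Int.lt_ceil.2 this
    omega
  · exact Int.ceil_le.2 (by push_cast; linarith)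

end CantorBase

section Lazy

variable {β : ℕ → ℝ} {x : ℝ}

lemma lazyDigit_eq_ceil (β : ℕ → ℝ) (x : ℝ) (n : ℕ) :
    lazyDigit β x n = ⌈β n * lazyRem β x n - xB (shiftBase β (n + 1))⌉ := by
  cases n <;> rfl

lemma lazyRem_succ (β : ℕ → ℝ) (x : ℝ) (n : ℕ) :
    lazyRem β x (n + 1) = β n * lazyRem β x n - lazyDigit β x n := by
  cases n <;> rfl

lemma lazyRem_mem (hmem : x ∈ Set.Ioc (xB β - 1) (xB β)) :
    ∀ n, lazyRem β x n ∈ Set.Ioc (xB (shiftBase β n) - 1) (xB (shiftBase β n))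
  | 0 => by rwa [shiftBase_zero]
  | n + 1 => by
    rw [lazyRem_succ, lazyDigit_eq_ceil]
    exact sub_ceil_sub_mem_Ioc _ _

lemma lazyDigit_validWord (hpos : ∀ n, 0 < β n) (hx : XBSummable β)
    (hmem : x ∈ Set.Ioc (xB β - 1) (xB β)) : validWord β (lazyDigit β x) := fun n => by
  rw [lazyDigit_eq_ceil]
  exact ceil_mul_sub_xB_mem hpos hx (lazyRem_mem hmem n)

lemma sum_lazyDigit_add_lazyRem (hne : ∀ n, β n ≠ 0) (x : ℝ) (n : ℕ) :
    ∑ k ∈ range n, (lazyDigit β x k : ℝ) / prodUpTo β k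
      + lazyRem β x n / ∏ i ∈ range n, β i = x := by
  induction n with
  | zero => simp [lazyRem]
  | succ n ih =>
    have hQ : ∏ i ∈ range n, β i ≠ 0 := prod_ne_zero_iff.2 fun i _ => hne i
    have hβn := hne n
    conv_rhs => rw [← ih]
    rw [sum_range_succ, lazyRem_succ, prodUpTo, prod_range_succ]
    field_simp
    ring

lemma tendsto_lazyRem_div (hβ : IsCantorBase β)
    (hmem : x ∈ Set.Ioc (xB β - 1) (xB β)) :
    Tendsto (fun n => lazyRem β x n / ∏ i ∈ range n, β i) atTop (𝓝 0) := by
  have hQ (n : ℕ) : 0 < ∏ i ∈ range n, β i := prod_pos fun i _ => hβ.pos i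
  have hlower (n : ℕ) : -(∏ i ∈ range n, β i)⁻¹ ≤ lazyRem β x n / ∏ i ∈ range n, β i := by
    rw [← one_div, ← neg_div, div_le_div_iff_of_pos_right (hQ n)]
    linarith [(lazyRem_mem hmem n).1, xB_nonneg (β := shiftBase β n) fun m => hβ.pos _]
  have hupper (n : ℕ) : lazyRem β x n / ∏ i ∈ range n, β i ≤ ∑' m, xBTerm β (m + n) := by
    rw [div_le_iff₀' (hQ n), ← xB_shiftBase fun n => (hβ.pos n).ne']
    exact (lazyRem_mem hmem n).2
  have hlim : Tendsto (fun n => -(∏ i ∈ range n, β i)⁻¹) atTop (𝓝 0) := by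
    simpa using hβ.prod_tendsto.inv_tendsto_atTop.neg
  exact tendsto_of_tendsto_of_tendsto_of_le_of_le hlim (tendsto_sum_nat_add _) hlower hupper

lemma hasSum_lazyDigit (hβ : IsCantorBase β) (hx : XBSummable β)
    (hmem : x ∈ Set.Ioc (xB β - 1) (xB β)) :
    HasSum (fun n => (lazyDigit β x n : ℝ) / prodUpTo β n) x := by
  have hvalid := lazyDigit_validWord hβ.pos hx hmem
  refine (hasSum_iff_tendsto_nat_of_nonneg (fun n => div_nonneg (by exact_mod_cast (hvalid n).1)
    (prodUpTo_pos hβ.pos n).le) x).2 ?_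
  have hlim := (tendsto_const_nhds (x := x)).sub (tendsto_lazyRem_div hβ hmem)
  rw [sub_zero] at hlim
  refine hlim.congr fun n => ?_
  linarith [sum_lazyDigit_add_lazyRem (fun n => (hβ.pos n).ne') x n]

end Lazy

section Tail

variable {β : ℕ → ℝ} {a : ℕ → ℤ}

lemma summable_of_validWord (hpos : ∀ n, 0 < β n) (hx : XBSummable β) (ha : validWord β a) :
    Summable fun n => (a n : ℝ) / prodUpTo β n :=
  Summable.of_nonneg_of_le (fun n => div_nonneg (by exact_mod_cast (ha n).1)
    (prodUpTo_pos hpos n).le) (fun n => div_le_div_of_nonneg_right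
      (by exact_mod_cast (ha n).2) (prodUpTo_pos hpos n).le) hx

lemma tailVal_zero (β : ℕ → ℝ) (a : ℕ → ℤ) : tailVal β a 0 = valB β a := by
  simp [tailVal, valB]

lemma mul_tailVal (hne : ∀ n, β n ≠ 0) (hs : Summable fun n => (a n : ℝ) / prodUpTo β n)
    (n : ℕ) : β n * tailVal β a n = a n + tailVal β a (n + 1) := by
  have hQ : ∏ i ∈ range n, β i ≠ 0 := prod_ne_zero_iff.2 fun i _ => hne i
  have hβn := hne n
  have hshift (m : ℕ) : m + 1 + n = m + (n + 1) := by omega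
  rw [tailVal, tailVal, ((summable_nat_add_iff n).2 hs).tsum_eq_zero_add, zero_add, prodUpTo,
    prod_range_succ]
  simp_rw [hshift]
  field_simp

lemma tailVal_le (hpos : ∀ n, 0 < β n) (hx : XBSummable β) (ha : validWord β a) (n : ℕ) :
    tailVal β a n ≤ xB (shiftBase β n) := by
  rw [tailVal, xB_shiftBase fun n => (hpos n).ne']
  refine mul_le_mul_of_nonneg_left ?_ (prod_pos fun i _ => hpos i).le
  have hterm (m : ℕ) : (a (m + n) : ℝ) / prodUpTo β (m + n) ≤ xBTerm β (m + n) := by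
    have h : (a (m + n) : ℝ) ≤ (⌈β (m + n)⌉ : ℝ) - 1 := by exact_mod_cast (ha (m + n)).2
    exact div_le_div_of_nonneg_right h (prodUpTo_pos hpos _).le
  have hx' : Summable (xBTerm β) := hx
  exact ((summable_nat_add_iff n).2 (summable_of_validWord hpos hx ha)).tsum_le_tsum hterm
    ((summable_nat_add_iff n).2 hx')

lemma lt_tailVal_succ_iff (hpos : ∀ n, 0 < β n) (c : ℝ) (l : ℕ) :
    c < tailVal β a (l + 1) ↔
      (∑' n : ℕ, (a (n + l + 1) : ℝ) / prodUpTo β (n + l + 1)) > c / prodUpTo β l := by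
  rw [gt_iff_lt, div_lt_iff₀' (prodUpTo_pos hpos l)]
  rfl

lemma eq_tailVal_of_rec (hne : ∀ n, β n ≠ 0) (hs : Summable fun n => (a n : ℝ) / prodUpTo β n)
    {r : ℕ → ℝ} (h0 : r 0 = valB β a) (hr : ∀ n, r (n + 1) = β n * r n - a n) :
    ∀ n, r n = tailVal β a n
  | 0 => h0.trans (tailVal_zero β a).symm
  | n + 1 => by rw [hr, eq_tailVal_of_rec hne hs h0 hr n, mul_tailVal hne hs]; ring

lemma lazyDigit_eq_of_tailVal_mem (hne : ∀ n, β n ≠ 0)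
    (hs : Summable fun n => (a n : ℝ) / prodUpTo β n) {x : ℝ} (hval : valB β a = x)
    (htail : ∀ n, tailVal β a (n + 1) ∈
      Set.Ioc (xB (shiftBase β (n + 1)) - 1) (xB (shiftBase β (n + 1)))) :
    lazyDigit β x = a := by
  have hdigit {n : ℕ} (h : lazyRem β x n = tailVal β a n) : lazyDigit β x n = a n := by
    rw [lazyDigit_eq_ceil, h, mul_tailVal hne hs]
    exact ceil_add_sub_eq (htail n) _
  have hrem (n : ℕ) : lazyRem β x n = tailVal β a n := by
    induction n with
    | zero => exact hval ▸ (tailVal_zero β a).symm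
    | succ n ih => rw [lazyRem_succ, hdigit ih, ih, mul_tailVal hne hs]; ring
  exact funext fun n => hdigit (hrem n)

end Tail

/-- characterization of the lazy β-expansion of `x ∈ (x_β−1, x_β]`. -/
theorem lazy_iff (β : ℕ → ℝ) (hβ : IsCantorBase β) (hx : XBSummable β)
    (a : ℕ → ℤ) (x : ℝ) (hmem : x ∈ Set.Ioc (xB β - 1) (xB β)) :
    a = lazyDigit β x ↔
      validWord β a ∧ valB β a = x ∧
      ∀ l : ℕ, (∑' n : ℕ, (a (n + l + 1) : ℝ) / prodUpTo β (n + l + 1)) >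
        (xB (shiftBase β (l + 1)) - 1) / prodUpTo β l := by
  have hne (n : ℕ) : β n ≠ 0 := (hβ.pos n).ne'
  constructor
  · rintro rfl
    have hsum := hasSum_lazyDigit hβ hx hmem
    have hrem := eq_tailVal_of_rec hne hsum.summable hsum.tsum_eq.symm (lazyRem_succ β x)
    refine ⟨lazyDigit_validWord hβ.pos hx hmem, hsum.tsum_eq, fun l => ?_⟩
    rw [← lt_tailVal_succ_iff hβ.pos, ← hrem]
    exact (lazyRem_mem hmem (l + 1)).1
  · rintro ⟨hvalid, hval, htail⟩
    refine (lazyDigit_eq_of_tailVal_mem hne (summable_of_validWord hβ.pos hx hvalid) hval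
      fun n => ⟨?_, tailVal_le hβ.pos hx hvalid (n + 1)⟩).symm
    exact (lt_tailVal_succ_iff hβ.pos _ n).2 (htail n)
end

section
/- Let β=(β_n)_{n∈ℕ} be a Cantor base with x_β<+∞. The map ℓ_β:(x_β−1,x_β]→ℕ^ℕ is increasing: for all x,y∈(x_β−1,x_β], x<y if and only if ℓ_β(x)<_lex ℓ_β(y). -/
open Filter Topology

/-!
The lazy algorithm keeps each remainder `s_{β,n}(x)` in the half-open interval
`(x_{β^(n+1)} - 1, x_{β^(n+1)}]` of length one. As long as the digits of `x` and `y` agree, the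
remainders differ by exactly `β_0 ⋯ β_n (y - x)`, which eventually exceeds one, so the expansions
of distinct points differ; at the first differing index the digit is a monotone function of the
common data, hence the larger point gets the larger digit. A strictly monotone map into the
linearly ordered `Lex (ℕ → ℤ)` reflects the order as well.
-/

lemma IsCantorBase.tendsto_prodUpTo {β : ℕ → ℝ} (hβ : IsCantorBase β) :
    Tendsto (prodUpTo β) atTop atTop :=
  hβ.prod_tendsto.comp (tendsto_add_atTop_nat 1)

lemma prodUpTo_succ (β : ℕ → ℝ) (n : ℕ) :
    prodUpTo β (n + 1) = prodUpTo β n * β (n + 1) :=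
  Finset.prod_range_succ β (n + 1)

lemma prodUpTo_nonneg {β : ℕ → ℝ} (hβ : ∀ n, 0 ≤ β n) (n : ℕ) : 0 ≤ prodUpTo β n :=
  Finset.prod_nonneg fun i _ => hβ i

lemma sub_ceil_sub_mem_Ioc_s5 {R : Type*} [CommRing R] [LinearOrder R] [IsStrictOrderedRing R]
    [FloorRing R] (t c : R) : t - ⌈t - c⌉ ∈ Set.Ioc (c - 1) c := by
  constructor <;> linarith [Int.le_ceil (t - c), Int.ceil_lt_add_one (t - c)]

lemma lazyS_zero (β : ℕ → ℝ) (x : ℝ) :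
    lazyS β x 0 = β 0 * x - lazyDigit β x 0 := rfl

lemma lazyS_succ (β : ℕ → ℝ) (x : ℝ) (n : ℕ) :
    lazyS β x (n + 1) = β (n + 1) * lazyS β x n - lazyDigit β x (n + 1) := rfl

lemma lazyS_mem_Ioc (β : ℕ → ℝ) (x : ℝ) (n : ℕ) :
    lazyS β x n ∈ Set.Ioc (xB (shiftBase β (n + 1)) - 1) (xB (shiftBase β (n + 1))) := by
  cases n <;> exact sub_ceil_sub_mem_Ioc_s5 _ _

lemma lazyS_sub_lazyS_of_lazyDigit_eq (β : ℕ → ℝ) {x y : ℝ} {n : ℕ}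
    (h : ∀ i ≤ n, lazyDigit β x i = lazyDigit β y i) :
    lazyS β y n - lazyS β x n = prodUpTo β n * (y - x) := by
  induction n with
  | zero =>
    rw [lazyS_zero, lazyS_zero, h 0 le_rfl]
    simp only [prodUpTo, zero_add, Finset.prod_range_one]
    ring
  | succ n ih =>
    have hprev := ih fun i hi => h i (Nat.le_succ_of_le hi)
    rw [lazyS_succ, lazyS_succ, h (n + 1) le_rfl, prodUpTo_succ]
    linear_combination β (n + 1) * hprev

lemma lazyDigit_le_lazyDigit_of_le {β : ℕ → ℝ} (hβ : ∀ n, 0 ≤ β n) {x y : ℝ} (hxy : x ≤ y)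
    {n : ℕ} (h : ∀ i < n, lazyDigit β x i = lazyDigit β y i) :
    lazyDigit β x n ≤ lazyDigit β y n := by
  cases n with
  | zero =>
    exact Int.ceil_le_ceil (by gcongr; exact hβ 0)
  | succ n =>
    have hdiff := lazyS_sub_lazyS_of_lazyDigit_eq β fun i hi => h i (Nat.lt_succ_of_le hi)
    have hs : lazyS β x n ≤ lazyS β y n := by
      nlinarith [prodUpTo_nonneg hβ n]
    exact Int.ceil_le_ceil (by gcongr; exact hβ (n + 1))

lemma lazyDigit_injective {β : ℕ → ℝ} (hβ : Tendsto (prodUpTo β) atTop atTop) :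
    Function.Injective (lazyDigit β) := by
  intro x y hxy
  by_contra hne
  have hpos : 0 < |y - x| := abs_pos.mpr (sub_ne_zero.mpr (Ne.symm hne))
  obtain ⟨n, hn⟩ := (hβ.eventually_ge_atTop (1 / |y - x|)).exists
  have hdiff := lazyS_sub_lazyS_of_lazyDigit_eq β (n := n) fun i _ => congrFun hxy i
  have hgap : |lazyS β y n - lazyS β x n| < 1 := by
    obtain ⟨hx₁, hx₂⟩ := lazyS_mem_Ioc β x n
    obtain ⟨hy₁, hy₂⟩ := lazyS_mem_Ioc β y n
    rw [abs_lt]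
    constructor <;> linarith
  have hprod : 0 < prodUpTo β n := lt_of_lt_of_le (by positivity) hn
  rw [hdiff, abs_mul, abs_of_pos hprod] at hgap
  have : 1 ≤ prodUpTo β n * |y - x| := by rwa [div_le_iff₀ hpos] at hn
  linarith

lemma Pi.toLex_lt_toLex_of_ne {ι α : Type*} [LinearOrder ι] [WellFoundedLT ι] [LinearOrder α]
    {a b : ι → α} (hne : a ≠ b) (h : ∀ n, (∀ i < n, a i = b i) → a n ≤ b n) :
    toLex a < toLex b := by
  refine lt_of_le_of_ne (not_lt.mp ?_) (toLex.injective.ne hne)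
  rintro ⟨k, hk, hlt⟩
  exact (h k fun i hi => (hk i hi).symm).not_gt hlt

lemma lexLt_iff_toLex_lt {a b : ℕ → ℤ} : lexLt a b ↔ toLex a < toLex b := Iff.rfl

lemma IsCantorBase.strictMono_toLex_lazyDigit {β : ℕ → ℝ} (hβ : IsCantorBase β) :
    StrictMono fun x => toLex (lazyDigit β x) := fun _ _ hxy =>
  Pi.toLex_lt_toLex_of_ne ((lazyDigit_injective hβ.tendsto_prodUpTo).ne hxy.ne)
    fun _ => lazyDigit_le_lazyDigit_of_le (fun n => (zero_lt_one.trans (hβ.one_lt n)).le) hxy.le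

theorem lazy_increasing_general (β : ℕ → ℝ) (hβ : IsCantorBase β) :
    ∀ x ∈ Set.Ioc (xB β - 1) (xB β), ∀ y ∈ Set.Ioc (xB β - 1) (xB β),
      (x < y ↔ lexLt (lazyDigit β x) (lazyDigit β y)) :=
  fun _ _ _ _ => lexLt_iff_toLex_lt.trans hβ.strictMono_toLex_lazyDigit.lt_iff_lt |>.symm

/-- the lazy expansion map is increasing on `(x_β−1, x_β]`. -/
theorem lazy_increasing (β : ℕ → ℝ) (hβ : IsCantorBase β) (hx : XBSummable β) :
    ∀ x ∈ Set.Ioc (xB β - 1) (xB β), ∀ y ∈ Set.Ioc (xB β - 1) (xB β),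
      (x < y ↔ lexLt (lazyDigit β x) (lazyDigit β y)) :=
  lazy_increasing_general β hβ
end

section
/- Let β=(β_n)_{n∈ℕ} be a Cantor base with x_β<+∞. The quasi-lazy β-expansion ℓ*_β(x_β−1) is the lexicographically least β-representation of x_β−1 among infinite words a with a_n∈[[0,⌈β_n⌉−1]] for all n∈ℕ that are not ultimately maximal: it is itself such a representation and is not ultimately maximal, and every β-representation a of x_β−1 with a_n∈[[0,⌈β_n⌉−1]] for all n satisfying a <_lex ℓ*_β(x_β−1) is ultimately maximal. -/
open Filter Topology

/-!
For `x ∈ (x_β - 1, x_β]` the lazy algorithm keeps the remainder `s_{β,n-1}(x)` in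
`(x_{β^(n)} - 1, x_{β^(n)}]`. Rescaled, this says that the first `n` lazy digits of `x` have value in
`[x - t_n, x - t_n + 1/(β_0 ⋯ β_{n-1}))`, where `t_n` is the value of the maximal tail
`(⌈β_m⌉ - 1)_{m ≥ n}`. Letting `x ↓ x_β - 1` with the first `n` digits frozen, the prefix values `P_n`
of `ℓ*` satisfy `x_β - 1 - t_n < P_n ≤ x_β - 1 - t_n + 1/(β_0 ⋯ β_{n-1})`. Squeezing gives
`val(ℓ*) = x_β - 1`; the strict lower bound rules out a maximal tail; and a representation of
`x_β - 1` falling below `ℓ*` at position `k` has prefix value at most `x_β - 1 - t_{k+1}`, so its tail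
from `k + 1` on must be the maximal one.
-/

namespace CantorBase

open Finset

noncomputable def partialProd (β : ℕ → ℝ) (n : ℕ) : ℝ := ∏ i ∈ range n, β i

noncomputable def maxWord (β : ℕ → ℝ) : ℕ → ℤ := fun n => ⌈β n⌉ - 1

noncomputable def prefixVal (β : ℕ → ℝ) (a : ℕ → ℤ) (n : ℕ) : ℝ :=
  ∑ k ∈ range n, (a k : ℝ) / prodUpTo β k

noncomputable def tailVal (β : ℕ → ℝ) (a : ℕ → ℤ) (n : ℕ) : ℝ :=
  ∑' m, (a (m + n) : ℝ) / prodUpTo β (m + n)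

variable {β : ℕ → ℝ}

lemma prodUpTo_eq_partialProd_succ (n : ℕ) : prodUpTo β n = partialProd β (n + 1) := rfl

lemma prodUpTo_eq_partialProd_mul (n : ℕ) : prodUpTo β n = partialProd β n * β n :=
  prod_range_succ β n

lemma partialProd_mul_prodUpTo_shiftBase (n m : ℕ) :
    partialProd β n * prodUpTo (shiftBase β n) m = prodUpTo β (m + n) := by
  rw [prodUpTo, prodUpTo, show m + n + 1 = n + (m + 1) by omega, prod_range_add β n (m + 1)]
  rfl

lemma prefixVal_succ (a : ℕ → ℤ) (n : ℕ) :
    prefixVal β a (n + 1) = prefixVal β a n + a n / prodUpTo β n :=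
  sum_range_succ _ n

lemma shiftBase_zero : shiftBase β 0 = β := funext fun m => congrArg β (zero_add m)

section Positive

variable (hpos : ∀ n, 0 < β n)
include hpos

lemma partialProd_pos (n : ℕ) : 0 < partialProd β n := prod_pos fun i _ => hpos i

lemma prodUpTo_pos (n : ℕ) : 0 < prodUpTo β n := partialProd_pos hpos (n + 1)

lemma maxWord_nonneg (n : ℕ) : 0 ≤ maxWord β n := by
  have : 0 < ⌈β n⌉ := Int.ceil_pos.mpr (hpos n)
  unfold maxWord; omega

lemma xB_shiftBase (n : ℕ) :
    xB (shiftBase β n) = partialProd β n * tailVal β (maxWord β) n := by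
  rw [xB, tailVal, ← tsum_mul_left]
  refine tsum_congr fun m => ?_
  rw [← partialProd_mul_prodUpTo_shiftBase n m, maxWord, shiftBase, add_comm n m]
  have := (partialProd_pos hpos n).ne'
  field_simp
  push_cast
  ring

end Positive

lemma tendsto_tailVal_maxWord : Tendsto (tailVal β (maxWord β)) atTop (𝓝 0) :=
  tendsto_sum_nat_add fun n => (maxWord β n : ℝ) / prodUpTo β n

lemma summable_maxWord (hx : XBSummable β) :
    Summable fun n => (maxWord β n : ℝ) / prodUpTo β n := by
  simpa [maxWord, XBSummable] using hx

section Summable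

variable (hpos : ∀ n, 0 < β n) (hx : XBSummable β)
include hpos hx

lemma summable_of_validWord {a : ℕ → ℤ} (ha : validWord β a) :
    Summable fun n => (a n : ℝ) / prodUpTo β n :=
  (summable_maxWord hx).of_nonneg_of_le
    (fun n => div_nonneg (by exact_mod_cast (ha n).1) (prodUpTo_pos hpos n).le)
    (fun n => div_le_div_of_nonneg_right (by exact_mod_cast (ha n).2) (prodUpTo_pos hpos n).le)

lemma valB_eq_prefixVal_add_tailVal {a : ℕ → ℤ} (ha : validWord β a) (n : ℕ) :
    valB β a = prefixVal β a n + tailVal β a n :=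
  ((summable_of_validWord hpos hx ha).sum_add_tsum_nat_add n).symm

lemma tailVal_succ {a : ℕ → ℤ} (ha : validWord β a) (n : ℕ) :
    tailVal β a n = a n / prodUpTo β n + tailVal β a (n + 1) := by
  rw [tailVal, ((summable_nat_add_iff n).mpr (summable_of_validWord hpos hx ha)).tsum_eq_zero_add]
  simp only [zero_add, tailVal, add_assoc, add_comm 1 n]

lemma eq_maxWord_of_tailVal_maxWord_le {a : ℕ → ℤ} (ha : validWord β a) {n : ℕ}
    (h : tailVal β (maxWord β) n ≤ tailVal β a n) : ∀ m, n ≤ m → a m = maxWord β m := by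
  set d : ℕ → ℝ := fun m => ((maxWord β (m + n) : ℝ) - a (m + n)) / prodUpTo β (m + n)
  have hd_nonneg : ∀ m, 0 ≤ d m := fun m =>
    div_nonneg (sub_nonneg.mpr (by exact_mod_cast (ha (m + n)).2)) (prodUpTo_pos hpos _).le
  have hd_sum : HasSum d (tailVal β (maxWord β) n - tailVal β a n) := by
    simp only [d, sub_div]
    exact (((summable_nat_add_iff n).mpr (summable_maxWord hx)).hasSum).sub
      ((summable_nat_add_iff n).mpr (summable_of_validWord hpos hx ha)).hasSum
  have hd_zero : d = 0 := by
    refine (hasSum_zero_iff_of_nonneg (L := SummationFilter.unconditional ℕ) hd_nonneg).mp ?_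
    convert hd_sum using 1
    linarith [hd_sum.nonneg hd_nonneg]
  intro m hm
  have := congrFun hd_zero (m - n)
  simp only [d, Nat.sub_add_cancel hm, Pi.zero_apply, div_eq_zero_iff,
    (prodUpTo_pos hpos m).ne', or_false, sub_eq_zero] at this
  exact_mod_cast this.symm

lemma mul_xB_shiftBase (n : ℕ) :
    β n * xB (shiftBase β n) = maxWord β n + xB (shiftBase β (n + 1)) := by
  have hmax : validWord β (maxWord β) := fun m => ⟨maxWord_nonneg hpos m, le_rfl⟩
  rw [xB_shiftBase hpos, xB_shiftBase hpos, tailVal_succ hpos hx hmax,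
    ← prodUpTo_eq_partialProd_succ, prodUpTo_eq_partialProd_mul]
  have := (partialProd_pos hpos n).ne'
  have := (hpos n).ne'
  field_simp

end Summable

/-- `lazyRem β x n` is `s_{β,n-1}(x)`, with the convention `s_{β,-1}(x) = x`. -/
noncomputable def lazyRem (β : ℕ → ℝ) (x : ℝ) : ℕ → ℝ
  | 0 => x
  | n + 1 => lazyS β x n

lemma lazyDigit_eq_ceil (x : ℝ) (n : ℕ) :
    lazyDigit β x n = ⌈β n * lazyRem β x n - xB (shiftBase β (n + 1))⌉ := by
  cases n <;> rfl

lemma lazyRem_succ (x : ℝ) (n : ℕ) :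
    lazyRem β x (n + 1) = β n * lazyRem β x n - lazyDigit β x n := by
  cases n <;> rfl

lemma lazyRem_mem_Ioc {x : ℝ} (hx : x ∈ Set.Ioc (xB β - 1) (xB β)) (n : ℕ) :
    lazyRem β x n ∈ Set.Ioc (xB (shiftBase β n) - 1) (xB (shiftBase β n)) := by
  cases n with
  | zero => rwa [shiftBase_zero]
  | succ n =>
    rw [lazyRem_succ, lazyDigit_eq_ceil]
    set y := β n * lazyRem β x n - xB (shiftBase β (n + 1))
    constructor <;> linarith [Int.le_ceil y, Int.ceil_lt_add_one y]

lemma ceil_sub_mem_Icc {b X X' s : ℝ} (hb : 0 < b) (hX : b * X = (⌈b⌉ - 1 : ℤ) + X')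
    (hs : s ∈ Set.Ioc (X - 1) X) : ⌈b * s - X'⌉ ∈ Set.Icc 0 (⌈b⌉ - 1) := by
  push_cast at hX
  have hlow : b * (X - 1) < b * s := mul_lt_mul_of_pos_left hs.1 hb
  have hupp : b * s ≤ b * X := mul_le_mul_of_nonneg_left hs.2 hb.le
  refine ⟨Int.ceil_nonneg_of_neg_one_lt ?_, Int.ceil_le.mpr ?_⟩
  · linarith [Int.le_ceil b]
  · push_cast; linarith

lemma validWord_lazyDigit (hpos : ∀ n, 0 < β n) (hx : XBSummable β) {x : ℝ}
    (hx0 : x ∈ Set.Ioc (xB β - 1) (xB β)) : validWord β (lazyDigit β x) := fun n => by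
  rw [lazyDigit_eq_ceil]
  exact ceil_sub_mem_Icc (hpos n) (mul_xB_shiftBase hpos hx n) (lazyRem_mem_Ioc hx0 n)

lemma prefixVal_lazyDigit_add (hpos : ∀ n, 0 < β n) (x : ℝ) (n : ℕ) :
    prefixVal β (lazyDigit β x) n + lazyRem β x n / partialProd β n = x := by
  induction n with
  | zero => simp [prefixVal, lazyRem, partialProd]
  | succ n ih =>
    rw [prefixVal_succ, lazyRem_succ, ← prodUpTo_eq_partialProd_succ, prodUpTo_eq_partialProd_mul]
    have := (partialProd_pos hpos n).ne'
    have := (hpos n).ne'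
    have hstep : (lazyDigit β x n : ℝ) / (partialProd β n * β n) +
        (β n * lazyRem β x n - lazyDigit β x n) / (partialProd β n * β n) =
        lazyRem β x n / partialProd β n := by
      field_simp
      ring
    linarith

lemma prefixVal_lazyDigit_mem_Ico (hpos : ∀ n, 0 < β n) {x : ℝ}
    (hx0 : x ∈ Set.Ioc (xB β - 1) (xB β)) (n : ℕ) :
    prefixVal β (lazyDigit β x) n ∈ Set.Ico (x - tailVal β (maxWord β) n)
      (x - tailVal β (maxWord β) n + (partialProd β n)⁻¹) := by
  have hR := partialProd_pos hpos n
  obtain ⟨hlow, hupp⟩ := lazyRem_mem_Ioc hx0 n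
  rw [xB_shiftBase hpos] at hlow hupp
  have hsum := prefixVal_lazyDigit_add hpos x n
  constructor
  · have : lazyRem β x n / partialProd β n ≤ tailVal β (maxWord β) n := by
      rw [div_le_iff₀ hR]; linarith
    linarith
  · have : tailVal β (maxWord β) n - (partialProd β n)⁻¹ <
        lazyRem β x n / partialProd β n := by
      rw [lt_div_iff₀ hR, sub_mul, inv_mul_cancel₀ hR.ne']; linarith
    linarith

lemma eventually_mem_Ioc_xB : ∀ᶠ x in 𝓝[>] (xB β - 1), x ∈ Set.Ioc (xB β - 1) (xB β) :=
  Ioc_mem_nhdsGT (by linarith)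

section QuasiLazy

variable {ℓ : ℕ → ℤ} (hl : Tendsto (lazyDigit β) (𝓝[>] (xB β - 1)) (𝓝 ℓ))
include hl

lemma eventually_lazyDigit_eq (k : ℕ) :
    ∀ᶠ x in 𝓝[>] (xB β - 1), lazyDigit β x k = ℓ k := by
  have h := tendsto_pi_nhds.mp hl k
  rwa [nhds_discrete, tendsto_pure] at h

lemma eventually_prefixVal_lazyDigit_eq (n : ℕ) :
    ∀ᶠ x in 𝓝[>] (xB β - 1), prefixVal β (lazyDigit β x) n = prefixVal β ℓ n := by
  filter_upwards [(eventually_all_finset (range n)).mpr fun k _ => eventually_lazyDigit_eq hl k]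
    with x hx
  exact sum_congr rfl fun k hk => by rw [hx k hk]

lemma validWord_of_tendsto_lazyDigit (hpos : ∀ n, 0 < β n) (hx : XBSummable β) :
    validWord β ℓ := fun n => by
  obtain ⟨x, hx0, hxn⟩ := (eventually_mem_Ioc_xB.and (eventually_lazyDigit_eq hl n)).exists
  rw [← hxn]
  exact validWord_lazyDigit hpos hx hx0 n

lemma prefixVal_mem_Ioc_of_tendsto_lazyDigit (hpos : ∀ n, 0 < β n) (n : ℕ) :
    prefixVal β ℓ n ∈ Set.Ioc (xB β - 1 - tailVal β (maxWord β) n)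
      (xB β - 1 - tailVal β (maxWord β) n + (partialProd β n)⁻¹) := by
  have hev : ∀ᶠ x in 𝓝[>] (xB β - 1), xB β - 1 < x ∧
      prefixVal β ℓ n ∈ Set.Ico (x - tailVal β (maxWord β) n)
        (x - tailVal β (maxWord β) n + (partialProd β n)⁻¹) := by
    filter_upwards [eventually_mem_Ioc_xB, eventually_prefixVal_lazyDigit_eq hl n] with x hx0 hpre
    exact ⟨hx0.1, hpre ▸ prefixVal_lazyDigit_mem_Ico hpos hx0 n⟩
  constructor
  · obtain ⟨x, hcx, hmem⟩ := hev.exists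
    linarith [hmem.1]
  · refine ge_of_tendsto ?_ (hev.mono fun x hx => hx.2.2.le)
    exact ((tendsto_id.sub_const _).add_const _).mono_left nhdsWithin_le_nhds

lemma valB_of_tendsto_lazyDigit (hβ : IsCantorBase β) (hx : XBSummable β) :
    valB β ℓ = xB β - 1 := by
  have hpos : ∀ n, 0 < β n := fun n => one_pos.trans (hβ.one_lt n)
  have hbounds := prefixVal_mem_Ioc_of_tendsto_lazyDigit hl hpos
  have hlow :
      Tendsto (fun n => xB β - 1 - tailVal β (maxWord β) n) atTop (𝓝 (xB β - 1)) := by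
    simpa using tendsto_tailVal_maxWord.const_sub (xB β - 1)
  have hupp : Tendsto (fun n => xB β - 1 - tailVal β (maxWord β) n + (partialProd β n)⁻¹)
      atTop (𝓝 (xB β - 1)) := by
    have hR : Tendsto (fun n => (partialProd β n)⁻¹) atTop (𝓝 0) :=
      tendsto_inv_atTop_zero.comp hβ.prod_tendsto
    simpa using hlow.add hR
  have hsum := summable_of_validWord hpos hx (validWord_of_tendsto_lazyDigit hl hpos hx)
  refine (hsum.hasSum_iff_tendsto_nat.mpr ?_).tsum_eq
  exact tendsto_of_tendsto_of_tendsto_of_le_of_le hlow hupp (fun n => (hbounds n).1.le)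
    (fun n => (hbounds n).2)

lemma not_eventually_maxWord_of_tendsto_lazyDigit (hβ : IsCantorBase β) (hx : XBSummable β) :
    ¬ ∃ N : ℕ, ∀ n, N ≤ n → ℓ n = maxWord β n := by
  have hpos : ∀ n, 0 < β n := fun n => one_pos.trans (hβ.one_lt n)
  rintro ⟨N, hN⟩
  have htail : tailVal β ℓ N = tailVal β (maxWord β) N :=
    tsum_congr fun m => by rw [hN (m + N) (Nat.le_add_left N m)]
  have hsplit :=
    valB_eq_prefixVal_add_tailVal hpos hx (validWord_of_tendsto_lazyDigit hl hpos hx) N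
  rw [valB_of_tendsto_lazyDigit hl hβ hx, htail] at hsplit
  linarith [(prefixVal_mem_Ioc_of_tendsto_lazyDigit hl hpos N).1]

lemma eventually_maxWord_of_lexLt_of_tendsto_lazyDigit (hpos : ∀ n, 0 < β n)
    (hx : XBSummable β) {a : ℕ → ℤ} (ha : validWord β a) (hval : valB β a = xB β - 1)
    (hlt : lexLt a ℓ) :
    ∃ N : ℕ, ∀ n, N ≤ n → a n = maxWord β n := by
  obtain ⟨k, hagree, hk⟩ := hlt
  refine ⟨k + 1, eq_maxWord_of_tailVal_maxWord_le hpos hx ha ?_⟩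
  have hprefix : prefixVal β a k = prefixVal β ℓ k :=
    sum_congr rfl fun i hi => by rw [hagree i (mem_range.mp hi)]
  have hdigit :
      (a k : ℝ) / prodUpTo β k ≤ ℓ k / prodUpTo β k - (partialProd β (k + 1))⁻¹ := by
    have : (a k : ℝ) ≤ ℓ k - 1 := by exact_mod_cast Int.le_sub_one_of_lt hk
    rw [prodUpTo_eq_partialProd_succ, ← one_div, ← sub_div]
    exact div_le_div_of_nonneg_right this (partialProd_pos hpos _).le
  have hsplit := valB_eq_prefixVal_add_tailVal hpos hx ha (k + 1)
  have hupp := (prefixVal_mem_Ioc_of_tendsto_lazyDigit hl hpos (k + 1)).2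
  rw [prefixVal_succ] at hsplit hupp
  linarith

end QuasiLazy

end CantorBase

/-- `ℓ*_β(x_β−1)` is the lexicographically least β-representation of
`x_β−1` with digits in `[[0,⌈β_n⌉-1]]` that is not ultimately maximal. -/
theorem quasiLazy_least_not_ultimately_maximal (β : ℕ → ℝ) (hβ : IsCantorBase β)
    (hx : XBSummable β) (ℓstar : ℕ → ℤ)
    (hl : Tendsto (lazyDigit β) (nhdsWithin (xB β - 1) (Set.Ioi (xB β - 1))) (nhds ℓstar)) :
    validWord β ℓstar ∧ valB β ℓstar = xB β - 1 ∧
    (¬ ∃ N : ℕ, ∀ n, N ≤ n → ℓstar n = ⌈β n⌉ - 1) ∧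
    ∀ a : ℕ → ℤ, validWord β a → valB β a = xB β - 1 → lexLt a ℓstar →
      ∃ N : ℕ, ∀ n, N ≤ n → a n = ⌈β n⌉ - 1 := by
  have hpos : ∀ n, 0 < β n := fun n => one_pos.trans (hβ.one_lt n)
  exact ⟨CantorBase.validWord_of_tendsto_lazyDigit hl hpos hx,
    CantorBase.valB_of_tendsto_lazyDigit hl hβ hx,
    CantorBase.not_eventually_maxWord_of_tendsto_lazyDigit hl hβ hx,
    fun _ ha hval hlt =>
      CantorBase.eventually_maxWord_of_lexLt_of_tendsto_lazyDigit hl hpos hx ha hval hlt⟩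
end
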